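/- arXiv:1007.0862 — 4 statements merged into one kernel-verified Lean document; each statement's English description precedes it below -/
import Mathlib

section
/- For every A ⊆ V_n with |A| = m and every choice of vertices σ^{i_1}, …, σ^{i_k} ∈ T_m, one has P_n( [ψ(A)](σ^{i_1}) = … = [ψ(A)](σ^{i_k}) = 1 ) ≤ ( (m + rm + … + r^g m)/(n − r) )^k. -/
open MeasureTheory
open scoped ENNReal
/-- A directed-graph structure on `V_n = Fin n`: each vertex `x` has an ordered `r`-tuple
of distinct input vertices `y_1(x), …, y_r(x)`, all different from `x`. -/
def IsGraph {n r : ℕ} (y : Fin n → Fin r → Fin n) : Prop :=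
  ∀ x, Function.Injective (y x) ∧ ∀ i, y x i ≠ x

/-- The uniform probability measure on the space of graph structures (the tuples are chosen
uniformly and independently for each vertex, which is the same as choosing the whole
structure uniformly). -/
noncomputable def graphMeasure (n r : ℕ) : Measure {y : Fin n → Fin r → Fin n // IsGraph y} :=
  (Nat.card {y : Fin n → Fin r → Fin n // IsGraph y} : ℝ≥0∞)⁻¹ • Measure.count

/-- `μ` is the joint law of i.i.d. Bernoulli(q) random variables indexed by `Fin n × ℕ`
(this property characterizes the product measure uniquely). -/
def IsBernoulliProduct (q : ℝ) {n : ℕ} (μ : Measure (Fin n → ℕ → Bool)) : Prop :=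
  ∀ (S : Finset (Fin n × ℕ)) (v : Fin n × ℕ → Bool),
    μ {ω | ∀ p ∈ S, ω p.1 p.2 = v p} =
      ∏ p ∈ S, (if v p then ENNReal.ofReal q else ENNReal.ofReal (1 - q))

/-- The threshold contact process on the graph `y`, driven by `B`, started from `ξ0`:
`ξ_{t+1}(x) = 1` iff `B x (t+1) = 1` and `ξ_t(y_i(x)) = 1` for some `i`. -/
def xi {n r : ℕ} (y : Fin n → Fin r → Fin n) (B : Fin n → ℕ → Bool)
    (ξ0 : Fin n → Bool) : ℕ → Fin n → Bool
  | 0 => ξ0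
  | t + 1 => fun x => B x (t + 1) && decide (∃ i : Fin r, xi y B ξ0 t (y x i) = true)

/-- The dual threshold contact process: `ξ̂_{t+1}(x) = 1` iff there are `z` and `i` with
`y_i(z) = x`, `ξ̂_t(z) = 1` and `B z t = 1`. -/
def xihat {n r : ℕ} (y : Fin n → Fin r → Fin n) (B : Fin n → ℕ → Bool)
    (ξ0 : Fin n → Bool) : ℕ → Fin n → Bool
  | 0 => ξ0
  | t + 1 => fun x =>
      decide (∃ z, ∃ i : Fin r, y z i = x ∧ xihat y B ξ0 t z = true ∧ B z t = true)

/-- The number of occupied sites of a configuration. -/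
def numOnes {n : ℕ} (ξ : Fin n → Bool) : ℕ := (Finset.univ.filter fun x => ξ x = true).card

/-- The joint law `P_n` of the random graph and the Bernoulli variables. -/
noncomputable def Pn (n r : ℕ) (μB : Measure (Fin n → ℕ → Bool)) :
    Measure ({y : Fin n → Fin r → Fin n // IsGraph y} × (Fin n → ℕ → Bool)) :=
  (graphMeasure n r).prod μB

/-- A vertex of the forest `T_m`: a root index in `Fin m` together with a path of length
`i ≤ g` with steps in `Fin r`. -/
abbrev Tvert (m g r : ℕ) := Fin m × Σ i : Fin (g + 1), (Fin (i : ℕ) → Fin r)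

namespace Tvert

/-- The generation (path length) of a vertex of `T_m`. -/
def len {m g r : ℕ} (σ : Tvert m g r) : ℕ := σ.2.1

/-- Truncation of `σ` to path length `l` (for `l ≤ len σ`): the prefix `(σ_0, …, σ_l)`. -/
def trunc {m g r : ℕ} (σ : Tvert m g r) (l : ℕ) : Tvert m g r :=
  ⟨σ.1, ⟨⟨min l (len σ), lt_of_le_of_lt (min_le_right _ _) σ.2.1.2⟩,
    fun k => σ.2.2 ⟨k, lt_of_lt_of_le k.2 (min_le_right _ _)⟩⟩⟩

/-- The tuple `(σ_0, σ_1, …, σ_i)` of a vertex, as a list of naturals. -/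
def key {m g r : ℕ} (σ : Tvert m g r) : List ℕ :=
  (σ.1 : ℕ) :: (List.ofFn σ.2.2).map Fin.val

/-- The order `≺` on `T_m`: shorter vertices first; among vertices of the same length,
lexicographic order on the tuple `(σ_0, …, σ_i)`. -/
def prec {m g r : ℕ} (σ σ' : Tvert m g r) : Prop :=
  len σ < len σ' ∨ (len σ = len σ' ∧ List.Lex (· < ·) (key σ) (key σ'))

/-- `σ → σ'` iff `σ' = (σ, j)` for some `j`, i.e. `σ'` extends `σ` by one step. -/
def edge {m g r : ℕ} (σ σ' : Tvert m g r) : Prop :=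
  len σ' = len σ + 1 ∧ trunc σ' (len σ) = σ

open scoped Classical in
/-- `J(B)`: the set of vertices reachable by one directed edge from `B`. -/
noncomputable def J {m g r : ℕ} (B : Finset (Tvert m g r)) : Finset (Tvert m g r) :=
  Finset.univ.filter fun σ' => ∃ σ ∈ B, edge σ σ'

end Tvert

/-- `z^σ = y_{σ_i}(y_{σ_{i-1}}(⋯ y_{σ_1}(x_{σ_0})⋯))`, where `x_1 < … < x_m` enumerates `A`. -/
noncomputable def zvert {n r m g : ℕ} (y : Fin n → Fin r → Fin n)
    (A : Finset (Fin n)) (hA : A.card = m) (σ : Tvert m g r) : Fin n :=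
  (List.ofFn σ.2.2).foldl (fun v j => y v j) (A.orderIsoOfFin hA σ.1 : Fin n)

open scoped Classical in
/-- `A^σ = {z^{σ'} : σ' ≺ σ}`. -/
noncomputable def Aseen {n r m g : ℕ} (y : Fin n → Fin r → Fin n)
    (A : Finset (Fin n)) (hA : A.card = m) (σ : Tvert m g r) : Finset (Fin n) :=
  (Finset.univ.filter fun σ' => Tvert.prec σ' σ).image (zvert y A hA)

open scoped Classical in
/-- The configuration `ψ(A) ∈ {0,1}^{T_m}`: roots get `0`; a non-root vertex `σ` gets `0`
if a strict prefix of `σ` already has value `1` or if `z^σ ∉ A^σ`, and gets `1` otherwise. -/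
noncomputable def psi {n r m g : ℕ} (y : Fin n → Fin r → Fin n)
    (A : Finset (Fin n)) (hA : A.card = m) : Tvert m g r → Bool := fun σ =>
  if h0 : Tvert.len σ = 0 then false
  else
    decide (zvert y A hA σ ∈ Aseen y A hA σ) &&
      !(List.range (Tvert.len σ)).any fun l =>
        if hl : l < Tvert.len σ then psi y A hA (Tvert.trunc σ l) else false
termination_by σ => Tvert.len σ
decreasing_by
  simp only [Tvert.trunc, Tvert.len]
  exact lt_of_le_of_lt (min_le_left _ _) hl

namespace Tvert

/-- `(B_0, …, B_i)` is a family: `B_0 ⊆ T⁰_m` and `B_{j+1} ⊆ J(B_j)` for `j < i`. -/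
def IsFamily {m g r : ℕ} (i : ℕ) (Bs : ℕ → Finset (Tvert m g r)) : Prop :=
  i < g ∧ (∀ σ ∈ Bs 0, len σ = 0) ∧ ∀ j < i, Bs (j + 1) ⊆ J (Bs j)

open scoped Classical in
/-- The part of `J(B)` on which `ψ` vanishes. -/
noncomputable def Jzero {m g r : ℕ} (ψ : Tvert m g r → Bool) (B : Finset (Tvert m g r)) :
    Finset (Tvert m g r) :=
  (J B).filter fun σ => ψ σ = false

/-- A family `(B_0, …, B_i)` is `ψ`-admissible. -/
def IsAdmissible {m g r : ℕ} (qt : ℝ) (ψ : Tvert m g r → Bool)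
    (i : ℕ) (Bs : ℕ → Finset (Tvert m g r)) : Prop :=
  IsFamily (g := g) i Bs ∧
    (∀ j ≤ i, ∀ σ ∈ Bs j, ψ σ = false) ∧
    (qt * m ≤ (Bs 0).card) ∧
    ∀ j < i, qt * (Jzero ψ (Bs j)).card ≤ (Bs (j + 1)).card

/-- A family `(B_0, …, B_i)` is `ψ`-good: it is `ψ`-admissible and in addition
`|J(B_j) ∩ {ψ = 0}| ≥ (q̃r − 1 − δ)(q̃r)^j m` for all `j ≤ i`. -/
def IsGood {m g r : ℕ} (qt δ : ℝ) (ψ : Tvert m g r → Bool)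
    (i : ℕ) (Bs : ℕ → Finset (Tvert m g r)) : Prop :=
  IsAdmissible qt ψ i Bs ∧
    ∀ j ≤ i, (qt * r - 1 - δ) * (qt * r) ^ j * m ≤ (Jzero ψ (Bs j)).card

/-- `ψ` is robust: every `ψ`-admissible family is `ψ`-good. -/
def Robust {m g r : ℕ} (qt δ : ℝ) (ψ : Tvert m g r → Bool) : Prop :=
  ∀ (i : ℕ) (Bs : ℕ → Finset (Tvert m g r)), IsAdmissible qt ψ i Bs → IsGood qt δ ψ i Bs

end Tvert

/-!
Switching argument. Let `σ` be the `≺`-last of the chosen vertices. If `ψ(σ) = 1`, then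
`σ = (τ₀, c)` reads the slot `(z^{τ₀}, c)` of the graph for the first time, and `z^σ = z^τ` for
some `τ ≺ σ`. Redirecting that slot to any of the `n - r` targets that keep the graph simple
changes nothing that is explored before `σ`, so `ψ` keeps its values at the other chosen
vertices; and the rewired graph together with `τ` determines the original graph and the new
target. Hence `|{ψ = 1 at all k}| · (n - r) ≤ |{ψ = 1 at the other k - 1}| · |T_m|`, and
induction on `k` gives the bound, as `|T_m| = m + rm + ⋯ + r^g m`.
-/

namespace List

theorem Lex.append_of_length_eq {α : Type*} {R : α → α → Prop} {l₁ l₂ : List α}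
    (hlen : l₁.length = l₂.length) (h : Lex R l₁ l₂) (t₁ t₂ : List α) :
    Lex R (l₁ ++ t₁) (l₂ ++ t₂) := by
  induction h with
  | nil => simp at hlen
  | cons _ ih => exact Lex.cons (ih (by simpa using hlen))
  | rel hab => exact Lex.rel hab

end List

namespace Tvert

variable {m g r : ℕ}

def steps (σ : Tvert m g r) : List (Fin r) := List.ofFn σ.2.2

def IsChild (τ : Tvert m g r) (c : Fin r) (σ : Tvert m g r) : Prop :=
  σ.1 = τ.1 ∧ steps σ = steps τ ++ [c]

def rank (σ : Tvert m g r) : ℕ ×ₗ List ℕ := toLex (len σ, key σ)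

theorem length_steps (σ : Tvert m g r) : (steps σ).length = len σ := List.length_ofFn

theorem steps_eq_nil {σ : Tvert m g r} (h : len σ = 0) : steps σ = [] :=
  List.eq_nil_of_length_eq_zero ((length_steps σ).trans h)

theorem key_eq (σ : Tvert m g r) : key σ = (σ.1 : ℕ) :: (steps σ).map Fin.val := rfl

theorem key_injective : Function.Injective (key : Tvert m g r → List ℕ) := by
  rintro ⟨a, i, p⟩ ⟨a', i', p'⟩ h
  obtain ⟨ha, hp⟩ := List.cons.inj h
  obtain ⟨hi, hp⟩ := Sigma.mk.inj_iff.1 <|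
    List.ofFn_inj'.1 (List.map_injective_iff.2 Fin.val_injective hp)
  obtain rfl : i = i' := Fin.ext hi
  obtain rfl : a = a' := Fin.ext ha
  cases eq_of_heq hp
  rfl

theorem eq_of_steps_eq {σ σ' : Tvert m g r} (h₁ : σ.1 = σ'.1) (h : steps σ = steps σ') :
    σ = σ' :=
  key_injective (by rw [key_eq, key_eq, h₁, h])

theorem prec_iff_rank_lt {σ σ' : Tvert m g r} : prec σ σ' ↔ rank σ < rank σ' := by
  rw [rank, rank, Prod.Lex.toLex_lt_toLex]
  rfl

theorem rank_injective : Function.Injective (rank : Tvert m g r → ℕ ×ₗ List ℕ) :=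
  fun _ _ h => key_injective (congrArg (fun p => (ofLex p).2) h)

theorem prec_irrefl (σ : Tvert m g r) : ¬ prec σ σ := by
  simp [prec_iff_rank_lt]

theorem prec_trans {σ₁ σ₂ σ₃ : Tvert m g r} (h₁ : prec σ₁ σ₂) (h₂ : prec σ₂ σ₃) :
    prec σ₁ σ₃ := by
  rw [prec_iff_rank_lt] at *
  exact h₁.trans h₂

theorem prec_asymm {σ σ' : Tvert m g r} (h : prec σ σ') : ¬ prec σ' σ :=
  fun h' => prec_irrefl σ (prec_trans h h')

theorem prec_or_prec_of_ne {σ σ' : Tvert m g r} (h : σ ≠ σ') : prec σ σ' ∨ prec σ' σ := by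
  simp only [prec_iff_rank_lt]
  exact lt_or_gt_of_ne (rank_injective.ne h)

theorem len_trunc (σ : Tvert m g r) (l : ℕ) : len (trunc σ l) = min l (len σ) := rfl

theorem steps_trunc (σ : Tvert m g r) (l : ℕ) : steps (trunc σ l) = (steps σ).take l := by
  apply List.ext_getElem
  · simp only [length_steps, List.length_take, len_trunc]
  · intro i _ _
    simp [steps, trunc]

theorem trunc_len (σ : Tvert m g r) : trunc σ (len σ) = σ :=
  eq_of_steps_eq rfl (by rw [steps_trunc, ← length_steps, List.take_length])

theorem trunc_prec {σ : Tvert m g r} {l : ℕ} (hl : l < len σ) : prec (trunc σ l) σ :=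
  Or.inl (by rw [len_trunc]; omega)

namespace IsChild

variable {τ τ' σ σ' : Tvert m g r} {c : Fin r}

theorem len_eq (h : IsChild τ c σ) : len σ = len τ + 1 := by
  rw [← length_steps, ← length_steps, h.2, List.length_append, List.length_singleton]

theorem prec (h : IsChild τ c σ) : Tvert.prec τ σ :=
  Or.inl (by rw [h.len_eq]; omega)

theorem trunc_eq (h : IsChild τ c σ) {l : ℕ} (hl : l ≤ len τ) : trunc σ l = trunc τ l :=
  eq_of_steps_eq h.1 <| by
    rw [steps_trunc, steps_trunc, h.2, List.take_append_of_le_length (by rwa [length_steps])]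

theorem unique (h : IsChild τ c σ) (h' : IsChild τ c σ') : σ = σ' :=
  eq_of_steps_eq (h.1.trans h'.1.symm) (h.2.trans h'.2.symm)

theorem prec_of_prec (h : IsChild τ c σ) (h' : IsChild τ' c σ') (hτ : Tvert.prec τ τ') :
    Tvert.prec σ σ' := by
  have hkey : ∀ {ρ ρ' : Tvert m g r}, IsChild ρ c ρ' → key ρ' = key ρ ++ [(c : ℕ)] := fun hρ => by
    rw [key_eq, key_eq, hρ.1, hρ.2, List.map_append]
    rfl
  rcases hτ with hlt | ⟨hlen, hlex⟩
  · exact Or.inl (by rw [h.len_eq, h'.len_eq]; omega)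
  · refine Or.inr ⟨by rw [h.len_eq, h'.len_eq, hlen], ?_⟩
    rw [hkey h, hkey h']
    exact hlex.append_of_length_eq (by simp [key_eq, length_steps, hlen]) _ _

end IsChild

theorem exists_isChild {σ : Tvert m g r} (h : len σ ≠ 0) : ∃ τ c, IsChild τ c σ := by
  have hne : steps σ ≠ [] := List.ne_nil_of_length_pos (by rw [length_steps]; omega)
  refine ⟨trunc σ (len σ - 1), (steps σ).getLast hne, rfl, ?_⟩
  rw [steps_trunc, ← length_steps, ← List.dropLast_eq_take, List.dropLast_append_getLast]

end Tvert

open Tvert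

section Exploration

variable {n m g r : ℕ} (y : Fin n → Fin r → Fin n) (A : Finset (Fin n)) (hA : A.card = m)

theorem zvert_of_len_eq_zero {σ : Tvert m g r} (h : len σ = 0) :
    zvert y A hA σ = A.orderIsoOfFin hA σ.1 := by
  rw [zvert, ← steps, steps_eq_nil h, List.foldl_nil]

theorem zvert_of_isChild {τ σ : Tvert m g r} {c : Fin r} (h : IsChild τ c σ) :
    zvert y A hA σ = y (zvert y A hA τ) c := by
  rw [zvert, ← steps, h.2, List.foldl_append, h.1]
  rfl

theorem mem_Aseen_iff {σ : Tvert m g r} {x : Fin n} :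
    x ∈ Aseen y A hA σ ↔ ∃ τ, prec τ σ ∧ zvert y A hA τ = x := by
  simp [Aseen]

theorem psi_eq_true_iff (σ : Tvert m g r) :
    psi y A hA σ = true ↔
      len σ ≠ 0 ∧ zvert y A hA σ ∈ Aseen y A hA σ ∧
        ∀ l < len σ, psi y A hA (trunc σ l) = false := by
  rw [psi]
  split_ifs with h0
  · simp [h0]
  · simp only [Bool.and_eq_true, decide_eq_true_eq, Bool.not_eq_true', List.any_eq_false,
      List.mem_range, Bool.not_eq_true]
    refine ⟨fun ⟨hmem, hpre⟩ => ⟨h0, hmem, fun l hl => ?_⟩,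
      fun ⟨_, hmem, hpre⟩ => ⟨hmem, fun l hl => ?_⟩⟩
    · simpa [dif_pos hl] using hpre l hl
    · simpa [dif_pos hl] using hpre l hl

variable {y A hA}

theorem zvert_eq_of_agree {y' : Fin n → Fin r → Fin n} {σ : Tvert m g r}
    (hagree : ∀ σ' τ c, prec σ' σ → IsChild τ c σ' →
      y' (zvert y A hA τ) c = y (zvert y A hA τ) c) :
    ∀ τ, prec τ σ → zvert y' A hA τ = zvert y A hA τ := by
  intro τ hτ
  induction hl : len τ using Nat.strong_induction_on generalizing τ with
  | _ l ih =>
  rcases eq_or_ne (len τ) 0 with h0 | h0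
  · rw [zvert_of_len_eq_zero _ _ _ h0, zvert_of_len_eq_zero _ _ _ h0]
  · obtain ⟨ρ, c, hc⟩ := exists_isChild h0
    rw [zvert_of_isChild _ _ _ hc, zvert_of_isChild _ _ _ hc,
      ih _ (by rw [← hl, hc.len_eq]; omega) ρ (prec_trans hc.prec hτ) rfl]
    exact hagree τ ρ c hτ hc

theorem psi_eq_of_zvert_eq {y' : Fin n → Fin r → Fin n} {σ : Tvert m g r}
    (hz : ∀ τ, prec τ σ ∨ τ = σ → zvert y' A hA τ = zvert y A hA τ) :
    psi y' A hA σ = psi y A hA σ := by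
  induction hl : len σ using Nat.strong_induction_on generalizing σ with
  | _ l ih =>
  have hAseen : Aseen y' A hA σ = Aseen y A hA σ := by
    ext x
    simp only [mem_Aseen_iff]
    exact exists_congr fun τ => and_congr_right fun hτ => by rw [hz τ (Or.inl hτ)]
  have htrunc : ∀ l' < len σ, psi y' A hA (trunc σ l') = psi y A hA (trunc σ l') :=
    fun l' hl' => ih _ (by rw [← hl, len_trunc]; omega) (fun τ hτ => hz τ <|
      Or.inl (hτ.elim (prec_trans · (trunc_prec hl')) (· ▸ trunc_prec hl'))) rfl
  rw [Bool.eq_iff_iff, psi_eq_true_iff, psi_eq_true_iff, hz σ (Or.inr rfl), hAseen]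
  exact and_congr_right fun _ => and_congr_right fun _ =>
    forall₂_congr fun l' hl' => by rw [htrunc l' hl']

theorem exists_prec_zvert_eq_of_psi_eq_true {σ : Tvert m g r} (hψ : psi y A hA σ = true) :
    ∃ τ, prec τ σ ∧ zvert y A hA τ = zvert y A hA σ :=
  (mem_Aseen_iff y A hA).1 ((psi_eq_true_iff y A hA σ).1 hψ).2.1

/-- Otherwise `ψ` would already be `1` at the parent `τ₀` of `σ` or at one of its prefixes. -/
theorem zvert_ne_of_prec_parent {σ τ₀ τ : Tvert m g r} {c : Fin r}
    (hψ : psi y A hA σ = true) (hc : IsChild τ₀ c σ) (hτ : prec τ τ₀) :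
    zvert y A hA τ ≠ zvert y A hA τ₀ := by
  intro heq
  rcases eq_or_ne (len τ₀) 0 with h0 | h0
  · have hτ0 : len τ = 0 := by rcases hτ with h | h <;> omega
    rw [zvert_of_len_eq_zero _ _ _ hτ0, zvert_of_len_eq_zero _ _ _ h0] at heq
    have : τ = τ₀ := eq_of_steps_eq ((A.orderIsoOfFin hA).injective (Subtype.ext heq))
      (by rw [steps_eq_nil hτ0, steps_eq_nil h0])
    exact prec_irrefl τ₀ (this ▸ hτ)
  · have hpre := ((psi_eq_true_iff y A hA σ).1 hψ).2.2
    have hτ₀ : psi y A hA τ₀ = true := (psi_eq_true_iff y A hA τ₀).2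
      ⟨h0, (mem_Aseen_iff y A hA).2 ⟨τ, hτ, heq⟩, fun l hl => by
        rw [← hc.trunc_eq hl.le]; exact hpre l (by rw [hc.len_eq]; omega)⟩
    have hτ₀' := hpre (len τ₀) (by rw [hc.len_eq]; omega)
    rw [hc.trunc_eq le_rfl, trunc_len, hτ₀] at hτ₀'
    exact Bool.noConfusion hτ₀'

theorem zvert_ne_of_isChild_of_prec {σ τ₀ σ' τ' : Tvert m g r} {c : Fin r}
    (hψ : psi y A hA σ = true) (hc : IsChild τ₀ c σ) (hσ' : prec σ' σ)
    (hc' : IsChild τ' c σ') : zvert y A hA τ' ≠ zvert y A hA τ₀ := by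
  rcases eq_or_ne τ' τ₀ with rfl | hne
  · exact (prec_irrefl σ (hc'.unique hc ▸ hσ')).elim
  · rcases prec_or_prec_of_ne hne with h | h
    · exact zvert_ne_of_prec_parent hψ hc h
    · exact (prec_asymm hσ' (hc.prec_of_prec hc' h)).elim

end Exploration

section Rewiring

variable {n r : ℕ}

def rewire (y : Fin n → Fin r → Fin n) (v : Fin n) (c : Fin r) (w : Fin n) :
    Fin n → Fin r → Fin n :=
  fun x i => if x = v ∧ i = c then w else y x i

/-- The targets `w` for which `rewire y v c w` is again a graph. -/
def freeTargets (y : Fin n → Fin r → Fin n) (v : Fin n) (c : Fin r) : Finset (Fin n) :=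
  (insert v ((Finset.univ.erase c).image (y v)))ᶜ

theorem card_freeTargets {y : Fin n → Fin r → Fin n} (hy : IsGraph y) (v : Fin n)
    (c : Fin r) : (freeTargets y v c).card = n - r := by
  have hv : v ∉ (Finset.univ.erase c).image (y v) := by
    simpa using fun i _ => (hy v).2 i
  rw [freeTargets, Finset.card_compl, Fintype.card_fin, Finset.card_insert_of_notMem hv,
    Finset.card_image_of_injective _ (hy v).1, Finset.card_erase_of_mem (Finset.mem_univ c),
    Finset.card_univ, Fintype.card_fin, Nat.sub_add_cancel c.pos]

theorem isGraph_rewire {y : Fin n → Fin r → Fin n} (hy : IsGraph y) {v : Fin n} {c : Fin r}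
    {w : Fin n} (hw : w ∈ freeTargets y v c) : IsGraph (rewire y v c w) := by
  simp only [freeTargets, Finset.mem_compl, Finset.mem_insert, Finset.mem_image,
    Finset.mem_erase, Finset.mem_univ, and_true, not_or, not_exists, not_and] at hw
  obtain ⟨hwv, hwy⟩ := hw
  intro x
  refine ⟨fun i j hij => ?_, fun i => ?_⟩
  · simp only [rewire] at hij
    by_cases hi : x = v ∧ i = c <;> by_cases hj : x = v ∧ j = c
    · rw [hi.2, hj.2]
    · rw [if_pos hi, if_neg hj, hi.1] at hij
      exact absurd hij.symm (hwy j fun h => hj ⟨hi.1, h⟩)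
    · rw [if_neg hi, if_pos hj, hj.1] at hij
      exact absurd hij (hwy i fun h => hi ⟨hj.1, h⟩)
    · rw [if_neg hi, if_neg hj] at hij
      exact (hy x).1 hij
  · simp only [rewire]
    split_ifs with hi
    · rw [hi.1]; exact hwv
    · exact (hy x).2 i

variable {m g : ℕ} {A : Finset (Fin n)} {hA : A.card = m}
  {y : Fin n → Fin r → Fin n} {σ τ₀ : Tvert m g r} {c : Fin r}

theorem zvert_rewire (hψ : psi y A hA σ = true) (hc : IsChild τ₀ c σ) (w : Fin n)
    {ρ : Tvert m g r} (hρ : prec ρ σ) :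
    zvert (rewire y (zvert y A hA τ₀) c w) A hA ρ = zvert y A hA ρ :=
  zvert_eq_of_agree (fun _ _ _ hσ' hc' => if_neg fun ⟨hx, hi⟩ =>
    zvert_ne_of_isChild_of_prec hψ hc hσ' (hi ▸ hc') hx) ρ hρ

theorem psi_rewire (hψ : psi y A hA σ = true) (hc : IsChild τ₀ c σ) (w : Fin n)
    {ρ : Tvert m g r} (hρ : prec ρ σ) :
    psi (rewire y (zvert y A hA τ₀) c w) A hA ρ = psi y A hA ρ :=
  psi_eq_of_zvert_eq fun _ hτ => zvert_rewire hψ hc w (hτ.elim (prec_trans · hρ) (· ▸ hρ))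

/-- The old target of the slot is `z^τ`, which the rewiring does not affect. -/
theorem eq_of_rewire_eq {y₁ y₂ : Fin n → Fin r → Fin n} {w₁ w₂ : Fin n} {τ : Tvert m g r}
    (hψ₁ : psi y₁ A hA σ = true) (hψ₂ : psi y₂ A hA σ = true) (hc : IsChild τ₀ c σ)
    (hτ : prec τ σ) (hz₁ : zvert y₁ A hA τ = zvert y₁ A hA σ)
    (hz₂ : zvert y₂ A hA τ = zvert y₂ A hA σ)
    (h : rewire y₁ (zvert y₁ A hA τ₀) c w₁ = rewire y₂ (zvert y₂ A hA τ₀) c w₂) :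
    y₁ = y₂ ∧ w₁ = w₂ := by
  have hz : ∀ ρ, prec ρ σ → zvert y₁ A hA ρ = zvert y₂ A hA ρ := fun ρ hρ => by
    rw [← zvert_rewire hψ₁ hc w₁ hρ, h, zvert_rewire hψ₂ hc w₂ hρ]
  have hv := hz τ₀ hc.prec
  have hslot : y₁ (zvert y₁ A hA τ₀) c = y₂ (zvert y₁ A hA τ₀) c := by
    rw [← zvert_of_isChild y₁ A hA hc, ← hz₁, hz τ hτ, hz₂, zvert_of_isChild y₂ A hA hc, hv]
  rw [← hv] at h
  refine ⟨funext₂ fun x i => ?_, by simpa [rewire] using congrFun₂ h (zvert y₁ A hA τ₀) c⟩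
  by_cases hxi : x = zvert y₁ A hA τ₀ ∧ i = c
  · rw [hxi.1, hxi.2, hslot]
  · simpa [rewire, hxi] using congrFun₂ h x i

end Rewiring

section Counting

open Finset
open scoped Classical

variable {n m g r : ℕ}

noncomputable def graphsWithOnes (A : Finset (Fin n)) (hA : A.card = m) (S : Finset (Tvert m g r)) :
    Finset {y : Fin n → Fin r → Fin n // IsGraph y} :=
  univ.filter fun y => ∀ σ ∈ S, psi y.1 A hA σ = true

/-- Switching: `(y, w) ↦ (y rewired at the slot read by σ, a witness τ ≺ σ with z^τ = z^σ)`
is injective. -/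
theorem card_graphsWithOnes_insert_mul_le (A : Finset (Fin n)) (hA : A.card = m)
    {S : Finset (Tvert m g r)} {σ : Tvert m g r} (hσ : ∀ σ' ∈ S, prec σ' σ) :
    #(graphsWithOnes A hA (insert σ S)) * (n - r) ≤
      #(graphsWithOnes A hA S) * Fintype.card (Tvert m g r) := by
  set E := graphsWithOnes A hA (insert σ S)
  have hE : ∀ y ∈ E, psi y.1 A hA σ = true := fun y hy =>
    (mem_filter.1 hy).2 σ (mem_insert_self σ S)
  rcases eq_or_ne (len σ) 0 with h0 | h0
  · have : E = ∅ := eq_empty_of_forall_notMem fun y hy => by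
      simpa [psi_eq_true_iff, h0] using hE y hy
    simp [this]
  obtain ⟨τ₀, c, hc⟩ := exists_isChild h0
  have : Nonempty (Tvert m g r) := ⟨σ⟩
  choose! τ hτ using fun y (hy : y ∈ E) => exists_prec_zvert_eq_of_psi_eq_true (hE y hy)
  let switch (p : Σ _ : {y : Fin n → Fin r → Fin n // IsGraph y}, Fin n) :
      {y : Fin n → Fin r → Fin n // IsGraph y} × Tvert m g r :=
    if hp : p.2 ∈ freeTargets p.1.1 (zvert p.1.1 A hA τ₀) c then
      (⟨rewire p.1.1 (zvert p.1.1 A hA τ₀) c p.2, isGraph_rewire p.1.2 hp⟩, τ p.1)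
    else (p.1, τ p.1)
  let D := E.sigma fun y => freeTargets y.1 (zvert y.1 A hA τ₀) c
  let T := graphsWithOnes A hA S ×ˢ (univ : Finset (Tvert m g r))
  have hmaps : Set.MapsTo switch D T := by
    rintro ⟨y, w⟩ hyw
    obtain ⟨hy, hw⟩ := mem_sigma.1 hyw
    simp only [T, switch, dif_pos hw, coe_product, coe_univ, Set.mem_prod, Set.mem_univ,
      and_true, mem_coe, graphsWithOnes, mem_filter, mem_univ, true_and]
    intro σ' hσ'
    rw [psi_rewire (hE y hy) hc w (hσ σ' hσ')]
    exact (mem_filter.1 hy).2 σ' (mem_insert_of_mem hσ')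
  have hinj : Set.InjOn switch D := by
    rintro ⟨y₁, w₁⟩ hyw₁ ⟨y₂, w₂⟩ hyw₂ heq
    obtain ⟨hy₁, hw₁⟩ := mem_sigma.1 hyw₁
    obtain ⟨hy₂, hw₂⟩ := mem_sigma.1 hyw₂
    simp only [switch, dif_pos hw₁, dif_pos hw₂, Prod.mk.injEq, Subtype.mk.injEq] at heq
    obtain ⟨hrw, hττ⟩ := heq
    obtain ⟨hτ₁, hz₁⟩ := hτ y₁ hy₁
    obtain ⟨-, hz₂⟩ := hτ y₂ hy₂
    rw [← hττ] at hz₂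
    obtain ⟨hy, rfl⟩ := eq_of_rewire_eq (hE y₁ hy₁) (hE y₂ hy₂) hc hτ₁ hz₁ hz₂ hrw
    obtain rfl : y₁ = y₂ := Subtype.ext hy
    rfl
  calc #E * (n - r) = #D := by
        rw [card_sigma, sum_congr rfl fun y _ => card_freeTargets y.2 _ _, sum_const,
          smul_eq_mul]
    _ ≤ #T := card_le_card_of_injOn switch hmaps hinj
    _ = #(graphsWithOnes A hA S) * Fintype.card (Tvert m g r) := by
        rw [card_product, card_univ]

theorem card_graphsWithOnes_mul_le (A : Finset (Fin n)) (hA : A.card = m)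
    (S : Finset (Tvert m g r)) :
    #(graphsWithOnes A hA S) * (n - r) ^ #S ≤
      Fintype.card {y : Fin n → Fin r → Fin n // IsGraph y} *
        Fintype.card (Tvert m g r) ^ #S := by
  refine Finset.induction_on_max_value rank S (by simp [graphsWithOnes])
    fun σ S hσ hmax ih => ?_
  have hprec : ∀ σ' ∈ S, prec σ' σ := fun σ' h => prec_iff_rank_lt.2 <|
      (hmax σ' h).lt_of_ne (rank_injective.ne (ne_of_mem_of_not_mem h hσ))
  have hstep := card_graphsWithOnes_insert_mul_le A hA hprec
  rw [card_insert_of_notMem hσ, pow_succ, pow_succ]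
  nlinarith [Nat.mul_le_mul_right ((n - r) ^ #S) hstep,
    Nat.mul_le_mul_left (Fintype.card (Tvert m g r)) ih]

end Counting

theorem card_tvert (m g r : ℕ) :
    Fintype.card (Tvert m g r) = ∑ i ∈ Finset.range (g + 1), r ^ i * m := by
  simp only [Fintype.card_prod, Fintype.card_fin, Fintype.card_sigma, Fintype.card_fun]
  rw [Fin.sum_univ_eq_sum_range (r ^ ·), Finset.mul_sum]
  exact Finset.sum_congr rfl fun i _ => mul_comm _ _

theorem isGraph_add_succ {n r : ℕ} (h : r < n) :
    IsGraph fun (x : Fin n) (i : Fin r) => x + ⟨i + 1, by omega⟩ := by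
  have : NeZero n := ⟨by omega⟩
  refine fun x => ⟨fun i j hij => Fin.ext ?_, fun i hi => ?_⟩
  · simpa using congrArg Fin.val (add_left_cancel hij)
  · have := congrArg Fin.val (add_eq_left.mp hi)
    simp at this

theorem ENNReal.inv_natCast_mul_le_div_pow {a b c d k : ℕ} (hb : b ≠ 0) (hd : d ≠ 0)
    (h : a * d ^ k ≤ b * c ^ k) : (b : ℝ≥0∞)⁻¹ * a ≤ ((c : ℝ≥0∞) / d) ^ k := by
  rw [div_eq_mul_inv, mul_pow, ← ENNReal.inv_pow, ← div_eq_mul_inv,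
    ENNReal.le_div_iff_mul_le (Or.inl (by simp [hd])) (Or.inl (by simp)),
    mul_assoc, ENNReal.inv_mul_le_iff (by simpa using hb) (by simp)]
  exact_mod_cast h

theorem psi_ones_probability_bound_general
    (n r g m k : ℕ) (hn : r < n)
    (A : Finset (Fin n)) (hA : A.card = m)
    (σs : Fin k → Tvert m g r) (hinj : Function.Injective σs) :
    graphMeasure n r {w | ∀ j : Fin k, psi w.1 A hA (σs j) = true} ≤
      (((∑ i ∈ Finset.range (g + 1), r ^ i * m : ℕ) : ℝ≥0∞) /
        ((n - r : ℕ) : ℝ≥0∞)) ^ k := by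
  classical
  have : Nonempty {y : Fin n → Fin r → Fin n // IsGraph y} := ⟨⟨_, isGraph_add_succ hn⟩⟩
  have hset : {w : {y : Fin n → Fin r → Fin n // IsGraph y} |
      ∀ j : Fin k, psi w.1 A hA (σs j) = true} =
      ↑(graphsWithOnes A hA (Finset.univ.image σs)) := by
    ext
    simp [graphsWithOnes]
  have hcount := card_graphsWithOnes_mul_le A hA (Finset.univ.image σs)
  rw [Finset.card_image_of_injective _ hinj, Finset.card_univ, Fintype.card_fin,
    card_tvert] at hcount
  rw [graphMeasure, Measure.smul_apply, hset, Measure.count_apply_finset, smul_eq_mul,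
    Nat.card_eq_fintype_card]
  exact ENNReal.inv_natCast_mul_le_div_pow Fintype.card_ne_zero (by omega) hcount

/-- **Lemma 2.2.** For `A ⊆ V_n` with `|A| = m` and distinct vertices
`σ^{i_1}, …, σ^{i_k} ∈ T_m`,
`P_n(ψ(A)(σ^{i_1}) = ⋯ = ψ(A)(σ^{i_k}) = 1) ≤ ((m + rm + ⋯ + r^g m)/(n-r))^k`. -/
theorem psi_ones_probability_bound
    (n r g m k : ℕ) (hr : 1 ≤ r) (hg : 1 ≤ g) (hn : r < n)
    (A : Finset (Fin n)) (hA : A.card = m)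
    (σs : Fin k → Tvert m g r) (hinj : Function.Injective σs) :
    graphMeasure n r {w | ∀ j : Fin k, psi w.1 A hA (σs j) = true} ≤
      (((∑ i ∈ Finset.range (g + 1), r ^ i * m : ℕ) : ℝ≥0∞) /
        ((n - r : ℕ) : ℝ≥0∞)) ^ k :=
  psi_ones_probability_bound_general n r g m k hn A hA σs hinj
end

section
/- Fix q̃ > 0 with q̃r > 1, δ ∈ (0, min(q̃r − 1, 1)), and an integer g ≥ 1. Let A ⊆ V_n with |A| = m (for any realization of the graph), and set d = |{σ ∈ T_m : [ψ(A)](σ) = 1}|. If d ≤ (1 + δ)m, then ψ(A) is robust, i.e., every ψ(A)-admissible family is ψ(A)-good. -/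
open MeasureTheory
open scoped ENNReal
/-!
Write `a_j = |J(B_j) ∩ {ψ = 0}|` and `e_j = |J(B_j) ∩ {ψ = 1}|`. Every vertex of `B_j` has `r`
children, so `r |B_j| ≤ a_j + e_j`; combined with admissibility this gives `a_0 + e_0 ≥ q̃r m` and
`a_{j+1} + e_{j+1} ≥ q̃r a_j`. Unrolling, `a_j ≥ (q̃r)^{j+1} m - (q̃r)^j (e_0 + ⋯ + e_j)`. The sets
`J(B_j)` lie in distinct generations, so `e_0 + ⋯ + e_j ≤ d ≤ (1 + δ) m`, which is the bound.
-/

open Finset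

theorem pow_succ_mul_le_add_pow_mul_sum {x m : ℝ} {a e : ℕ → ℝ} {i : ℕ} (hx : 1 ≤ x)
    (he : ∀ l, 0 ≤ e l) (h0 : x * m ≤ a 0 + e 0)
    (hstep : ∀ j < i, x * a j ≤ a (j + 1) + e (j + 1)) :
    ∀ j ≤ i, x ^ (j + 1) * m ≤ a j + x ^ j * ∑ l ∈ range (j + 1), e l := by
  intro j
  induction j with
  | zero => simpa using h0
  | succ j ih =>
    intro hj
    have hx0 : 0 ≤ x := zero_le_one.trans hx
    have he_le : e (j + 1) ≤ x ^ (j + 1) * e (j + 1) :=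
      le_mul_of_one_le_left (he _) (one_le_pow₀ hx)
    calc x ^ (j + 1 + 1) * m = x * (x ^ (j + 1) * m) := by ring
      _ ≤ x * (a j + x ^ j * ∑ l ∈ range (j + 1), e l) :=
          mul_le_mul_of_nonneg_left (ih (by omega)) hx0
      _ = x * a j + x ^ (j + 1) * ∑ l ∈ range (j + 1), e l := by ring
      _ ≤ a (j + 1) + e (j + 1) + x ^ (j + 1) * ∑ l ∈ range (j + 1), e l := by
          linarith [hstep j (by omega)]
      _ ≤ a (j + 1) + x ^ (j + 1) * ∑ l ∈ range (j + 1 + 1), e l := by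
          rw [sum_range_succ _ (j + 1)]
          linarith

namespace Tvert

variable {m g r : ℕ}

def child (σ : Tvert m g r) (j : Fin r) (h : len σ < g) : Tvert m g r :=
  ⟨σ.1, ⟨⟨len σ + 1, by omega⟩, Fin.snoc σ.2.2 j⟩⟩

theorem trunc_child (σ : Tvert m g r) (j : Fin r) (h : len σ < g) :
    trunc (child σ j h) (len σ) = σ := by
  obtain ⟨a, k, f⟩ := σ
  simp only [trunc, child, len, Prod.mk.injEq, true_and]
  refine Sigma.ext (Fin.ext (by simp)) ((Fin.heq_fun_iff (by simp)).2 fun l => ?_)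
  have hl : (l : ℕ) < k := by simpa using l.2
  simpa using Fin.snoc_castSucc (α := fun _ => Fin r) j f ⟨l, hl⟩

theorem edge_child (σ : Tvert m g r) (j : Fin r) (h : len σ < g) : edge σ (child σ j h) :=
  ⟨rfl, trunc_child σ j h⟩

theorem eq_and_eq_of_child_eq {σ σ' : Tvert m g r} {j j' : Fin r} {h : len σ < g}
    {h' : len σ' < g} (he : child σ j h = child σ' j' h') : σ = σ' ∧ j = j' := by
  have hσ : σ = σ' := by
    have hl : len σ = len σ' := by simpa [child, len] using congrArg len he
    rw [← trunc_child σ j h, ← trunc_child σ' j' h', hl, he]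
  subst hσ
  simpa [child, len] using he

theorem mem_J {B : Finset (Tvert m g r)} {σ' : Tvert m g r} :
    σ' ∈ J B ↔ ∃ σ ∈ B, edge σ σ' := by
  classical
  simp [J]

theorem mul_card_le_card_J (B : Finset (Tvert m g r)) (hB : ∀ σ ∈ B, len σ < g) :
    r * #B ≤ #(J B) := by
  classical
  have key : #(B ×ˢ (univ : Finset (Fin r))) ≤ #(J B) := by
    refine card_le_card_of_injOn (fun p => if h : len p.1 < g then child p.1 p.2 h else p.1)
      ?_ ?_
    · rintro ⟨σ, j⟩ hp
      simp only [coe_product, Set.mem_prod, mem_coe] at hp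
      simp only [mem_coe, dif_pos (hB σ hp.1)]
      exact mem_J.2 ⟨σ, hp.1, edge_child σ j (hB σ hp.1)⟩
    · rintro ⟨σ, j⟩ hp ⟨σ', j'⟩ hp' he
      simp only [coe_product, Set.mem_prod, mem_coe] at hp hp'
      simp only [dif_pos (hB σ hp.1), dif_pos (hB σ' hp'.1)] at he
      obtain ⟨rfl, rfl⟩ := eq_and_eq_of_child_eq he
      rfl
  simpa [mul_comm] using key

open scoped Classical in
noncomputable def Jone (ψ : Tvert m g r → Bool) (B : Finset (Tvert m g r)) :
    Finset (Tvert m g r) :=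
  (J B).filter fun σ => ψ σ = true

theorem card_Jzero_add_card_Jone (ψ : Tvert m g r → Bool) (B : Finset (Tvert m g r)) :
    #(Jzero ψ B) + #(Jone ψ B) = #(J B) := by
  classical
  simpa [Jzero, Jone] using card_filter_add_card_filter_not (s := J B) fun σ => ψ σ = false

section Family

variable {i : ℕ} {Bs : ℕ → Finset (Tvert m g r)}

theorem IsFamily.len_eq (hB : IsFamily i Bs) {j : ℕ} (hj : j ≤ i) {σ : Tvert m g r}
    (hσ : σ ∈ Bs j) : len σ = j := by
  induction j generalizing σ with
  | zero => exact hB.2.1 σ hσ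
  | succ j ih =>
    obtain ⟨τ, hτ, hlen, -⟩ := mem_J.1 (hB.2.2 j (by omega) hσ)
    rw [hlen, ih (by omega) hτ]

theorem IsFamily.len_eq_of_mem_J (hB : IsFamily i Bs) {j : ℕ} (hj : j ≤ i) {σ : Tvert m g r}
    (hσ : σ ∈ J (Bs j)) : len σ = j + 1 := by
  obtain ⟨τ, hτ, hlen, -⟩ := mem_J.1 hσ
  rw [hlen, hB.len_eq hj hτ]

theorem IsFamily.mul_card_le_card_Jzero_add_card_Jone (hB : IsFamily i Bs) {j : ℕ} (hj : j ≤ i)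
    (ψ : Tvert m g r → Bool) : r * #(Bs j) ≤ #(Jzero ψ (Bs j)) + #(Jone ψ (Bs j)) := by
  rw [card_Jzero_add_card_Jone]
  refine mul_card_le_card_J _ fun σ hσ => ?_
  rw [hB.len_eq hj hσ]
  exact hj.trans_lt hB.1

theorem IsFamily.sum_card_Jone_le (hB : IsFamily i Bs) {j : ℕ} (hj : j ≤ i)
    (ψ : Tvert m g r → Bool) :
    ∑ l ∈ range (j + 1), #(Jone ψ (Bs l)) ≤ #(univ.filter fun σ => ψ σ = true) := by
  classical
  have hdisj : (range (j + 1) : Set ℕ).PairwiseDisjoint fun l => Jone ψ (Bs l) := by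
    intro l hl l' hl' hne
    simp only [Function.onFun, Jone, coe_range, Set.mem_Iio] at hl hl' ⊢
    refine disjoint_left.2 fun σ hσ hσ' => hne ?_
    have h := hB.len_eq_of_mem_J (by omega) (mem_filter.1 hσ).1
    have h' := hB.len_eq_of_mem_J (by omega) (mem_filter.1 hσ').1
    omega
  rw [← card_biUnion hdisj]
  refine card_le_card fun σ hσ => ?_
  obtain ⟨l, -, hσ⟩ := mem_biUnion.1 hσ
  simpa [Jone] using (mem_filter.1 hσ).2

end Family

theorem IsAdmissible.pow_succ_mul_le {qt : ℝ} {ψ : Tvert m g r → Bool} {i : ℕ}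
    {Bs : ℕ → Finset (Tvert m g r)} (hB : IsAdmissible qt ψ i Bs) (hqtr : 1 ≤ qt * r)
    {j : ℕ} (hj : j ≤ i) :
    (qt * r) ^ (j + 1) * m ≤
      #(Jzero ψ (Bs j)) + (qt * r) ^ j * ∑ l ∈ range (j + 1), (#(Jone ψ (Bs l)) : ℝ) := by
  obtain ⟨hfam, -, hB0, hBstep⟩ := hB
  have hchild : ∀ l ≤ i, ∀ u : ℝ, qt * u ≤ #(Bs l) →
      qt * r * u ≤ #(Jzero ψ (Bs l)) + #(Jone ψ (Bs l)) := by
    intro l hl u hu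
    have h := hfam.mul_card_le_card_Jzero_add_card_Jone hl ψ
    calc qt * r * u = r * (qt * u) := by ring
      _ ≤ r * #(Bs l) := mul_le_mul_of_nonneg_left hu r.cast_nonneg
      _ ≤ #(Jzero ψ (Bs l)) + #(Jone ψ (Bs l)) := by exact_mod_cast h
  exact pow_succ_mul_le_add_pow_mul_sum (a := fun l => #(Jzero ψ (Bs l)))
    (e := fun l => #(Jone ψ (Bs l))) hqtr (fun l => Nat.cast_nonneg _)
    (hchild 0 i.zero_le m hB0) (fun l hl => hchild (l + 1) hl _ (hBstep l hl)) j hj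

theorem robust_of_card_ones_le {qt δ : ℝ} {ψ : Tvert m g r → Bool} (hqtr : 1 ≤ qt * r)
    (hd : (#(univ.filter fun σ => ψ σ = true) : ℝ) ≤ (1 + δ) * m) : Robust qt δ ψ := by
  intro i Bs hB
  refine ⟨hB, fun j hj => ?_⟩
  have hsum : ∑ l ∈ range (j + 1), (#(Jone ψ (Bs l)) : ℝ) ≤ (1 + δ) * m :=
    le_trans (by exact_mod_cast hB.1.sum_card_Jone_le hj ψ) hd
  have hpow : 0 ≤ (qt * r) ^ j := pow_nonneg (zero_le_one.trans hqtr) j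
  have key := hB.pow_succ_mul_le hqtr hj
  rw [pow_succ] at key
  linarith [mul_le_mul_of_nonneg_left hsum hpow]

end Tvert

theorem robust_of_few_ones_general
    (n r g m : ℕ)
    (y : Fin n → Fin r → Fin n)
    (qt : ℝ) (hqtr : 1 < qt * r)
    (δ : ℝ)
    (A : Finset (Fin n)) (hA : A.card = m)
    (hd : ((Finset.univ.filter fun σ : Tvert m g r => psi y A hA σ = true).card : ℝ) ≤
      (1 + δ) * m) :
    Tvert.Robust qt δ (psi (g := g) y A hA) :=
  Tvert.robust_of_card_ones_le hqtr.le hd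

/-- **Deterministic step of Lemma 2.4.** If the number `d` of sites of `T_m` where `ψ(A)`
equals `1` satisfies `d ≤ (1+δ)m`, then `ψ(A)` is robust. -/
theorem robust_of_few_ones
    (n r g m : ℕ) (hr : 1 ≤ r) (hg : 1 ≤ g) (hn : r < n)
    (y : Fin n → Fin r → Fin n) (hy : IsGraph y)
    (qt : ℝ) (hqt0 : 0 < qt) (hqtr : 1 < qt * r)
    (δ : ℝ) (hδ0 : 0 < δ) (hδ1 : δ < min (qt * r - 1) 1)
    (A : Finset (Fin n)) (hA : A.card = m)
    (hd : ((Finset.univ.filter fun σ : Tvert m g r => psi y A hA σ = true).card : ℝ) ≤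
      (1 + δ) * m) :
    Tvert.Robust qt δ (psi (g := g) y A hA) :=
  robust_of_few_ones_general n r g m y qt hqtr δ A hA hd
end

section
/- Fix a realization of the graph (y_i(x)) and of the variables {B^x_t : x ∈ V_n, 1 ≤ t ≤ T}, and define the time-reversed variables B̂^{x,T}_t = B^x_{T−t} for 0 ≤ t < T. Then for all A, B ⊆ V_n, the event {ξ^A_T ∩ B ≠ ∅} occurs if and only if the event {ξ̂^{B,T}_T ∩ A ≠ ∅} occurs (duality equation, holding pathwise). -/
open MeasureTheory
open scoped ENNReal
/-!
Pair the forward process at time `s` with the dual process, driven by the time-reversed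
variables, at time `T - s`. Whether the two configurations meet does not depend on `s`: both
at `s` and at `s + 1` it means that some occupied site `z` of the dual at time `T - s - 1` with
`B z (s + 1) = 1` has an input `y_i(z)` occupied by the forward process at time `s`. Comparing
`s = T` with `s = 0` gives the duality equation.
-/

def Meets {n : ℕ} (ξ η : Fin n → Bool) : Prop := ∃ x, ξ x = true ∧ η x = true

section Duality

variable {n r : ℕ} (y : Fin n → Fin r → Fin n) (B : Fin n → ℕ → Bool)

theorem xi_succ_apply_eq_true (ξ0 : Fin n → Bool) (t : ℕ) (x : Fin n) :
    xi y B ξ0 (t + 1) x = true ↔ B x (t + 1) = true ∧ ∃ i, xi y B ξ0 t (y x i) = true := by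
  simp [xi]

theorem xihat_succ_apply_eq_true (η0 : Fin n → Bool) (t : ℕ) (x : Fin n) :
    xihat y B η0 (t + 1) x = true ↔
      ∃ z i, y z i = x ∧ xihat y B η0 t z = true ∧ B z t = true := by
  simp [xihat]

theorem meets_xi_succ_iff (ξ0 η : Fin n → Bool) (t : ℕ) :
    Meets (xi y B ξ0 (t + 1)) η ↔
      ∃ z i, xi y B ξ0 t (y z i) = true ∧ η z = true ∧ B z (t + 1) = true := by
  simp only [Meets, xi_succ_apply_eq_true]
  constructor
  · rintro ⟨z, ⟨hB, i, hi⟩, hη⟩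
    exact ⟨z, i, hi, hη, hB⟩
  · rintro ⟨z, i, hi, hη, hB⟩
    exact ⟨z, ⟨hB, i, hi⟩, hη⟩

theorem meets_xihat_succ_iff (ξ η0 : Fin n → Bool) (t : ℕ) :
    Meets ξ (xihat y B η0 (t + 1)) ↔
      ∃ z i, ξ (y z i) = true ∧ xihat y B η0 t z = true ∧ B z t = true := by
  simp only [Meets, xihat_succ_apply_eq_true]
  constructor
  · rintro ⟨_, hξ, z, i, rfl, hη, hB⟩
    exact ⟨z, i, hξ, hη, hB⟩
  · rintro ⟨z, i, hξ, hη, hB⟩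
    exact ⟨y z i, hξ, z, i, rfl, hη, hB⟩

theorem meets_xi_xihat_reverse_succ_iff (ξ0 η0 : Fin n → Bool) {T s : ℕ} (hs : s < T) :
    Meets (xi y B ξ0 (s + 1)) (xihat y (fun z t => B z (T - t)) η0 (T - (s + 1))) ↔
      Meets (xi y B ξ0 s) (xihat y (fun z t => B z (T - t)) η0 (T - s)) := by
  obtain ⟨u, rfl⟩ : ∃ u, T = s + 1 + u := ⟨T - (s + 1), by omega⟩
  rw [show s + 1 + u - s = u + 1 by omega, show s + 1 + u - (s + 1) = u by omega,
    meets_xi_succ_iff, meets_xihat_succ_iff, show s + 1 + u - u = s + 1 by omega]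

theorem meets_xi_xihat_reverse_iff (ξ0 η0 : Fin n → Bool) {T s : ℕ} (hs : s ≤ T) :
    Meets (xi y B ξ0 s) (xihat y (fun z t => B z (T - t)) η0 (T - s)) ↔
      Meets ξ0 (xihat y (fun z t => B z (T - t)) η0 T) := by
  induction s with
  | zero => rfl
  | succ s ih => rw [meets_xi_xihat_reverse_succ_iff y B ξ0 η0 hs, ih (by omega)]

end Duality

theorem duality_equation_general
    (n r T : ℕ)
    (y : Fin n → Fin r → Fin n)
    (B : Fin n → ℕ → Bool)
    (A Bset : Finset (Fin n)) :
    (∃ x ∈ Bset, xi y B (fun v => decide (v ∈ A)) T x = true) ↔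
      (∃ x ∈ A,
        xihat y (fun z t => B z (T - t)) (fun v => decide (v ∈ Bset)) T x = true) := by
  have h := meets_xi_xihat_reverse_iff y B (fun v => decide (v ∈ A))
    (fun v => decide (v ∈ Bset)) (le_refl T)
  rw [Nat.sub_self] at h
  simpa only [Meets, xihat, decide_eq_true_eq, and_comm] using h

/-- **Duality equation (pathwise).** For a fixed realization of the graph and of the driving
variables, `ξ^A_T ∩ B ≠ ∅` if and only if `ξ̂^{B,T}_T ∩ A ≠ ∅`, where the dual is driven by
the time-reversed variables `B̂^{x,T}_t = B^x_{T-t}`. -/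
theorem duality_equation
    (n r T : ℕ) (hr : 1 ≤ r) (hn : r < n) (hT : 1 ≤ T)
    (y : Fin n → Fin r → Fin n) (hy : IsGraph y)
    (B : Fin n → ℕ → Bool)
    (A Bset : Finset (Fin n)) :
    (∃ x ∈ Bset, xi y B (fun v => decide (v ∈ A)) T x = true) ↔
      (∃ x ∈ A,
        xihat y (fun z t => B z (T - t)) (fun v => decide (v ∈ Bset)) T x = true) :=
  duality_equation_general n r T y B A Bset
end

section
/- For every x ∈ V_n, every t ≥ 0 and every k ≥ 0, P_n( |ξ̂^x_t| ≥ k ) ≤ P( Z_t ≥ k ), where (Z_t) is the branching process with Z_0 = 1 and Z_{t+1} = r · Σ_{j=1}^{Z_t} β_{t+1,j} for an i.i.d. array {β_{t,j} : t ≥ 1, j ≥ 1} of Bernoulli(q) random variables; i.e., |ξ̂^x_t| is stochastically dominated by the Galton–Watson process in which each individual independently has r children with probability q and no children with probability 1−q. -/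
open MeasureTheory
open scoped ENNReal
/-- The law of `β_1 + ⋯ + β_k` for i.i.d. Bernoulli(p) variables `β_j`. -/
noncomputable def bernoulliSumLaw (p : ℝ≥0∞) (hp : p ≤ 1) : ℕ → PMF ℕ
  | 0 => PMF.pure 0
  | k + 1 =>
      (PMF.ofFintype (fun b : Bool => cond b p (1 - p)) (by simp [hp])).bind fun b =>
        (bernoulliSumLaw p hp k).map fun s => s + (if b then 1 else 0)

/-- The law at time `t` of the branching process `Z` with `Z_0 = 1` and
`Z_{t+1} = r · Σ_{j=1}^{Z_t} β_{t+1,j}`, where the `β`'s are i.i.d. Bernoulli(p); i.e. the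
Galton–Watson process in which each individual independently has `r` children with
probability `p` and no children with probability `1-p`. -/
noncomputable def gwLaw (p : ℝ≥0∞) (hp : p ≤ 1) (r : ℕ) : ℕ → PMF ℕ
  | 0 => PMF.pure 1
  | t + 1 => (gwLaw p hp r t).bind fun z => (bernoulliSumLaw p hp z).map fun s => r * s


/-!
Fix the graph. The configuration `ξ̂_t` is a function of the finitely many driving variables
`B z s`, `s < t`, so its law is a finite sum of Bernoulli weights over such blocks. An occupied
site `z` at time `t` occupies at most the `r` sites `y_i(z)` at time `t + 1`, and only if
`B z t = 1`; given the past, `|ξ̂_{t+1}|` is therefore at most `r` times a Binomial(`|ξ̂_t|`, q)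
variable. One proves `E g(|ξ̂_t|) ≤ E g(Z_t)` for all monotone `g` at once, by induction on `t`:
`E g(|ξ̂_{t+1}|) ≤ E G(|ξ̂_t|)` with `G m = E g(r · Binomial(m, q))`, which is again monotone, and
`E G(Z_t) = E g(Z_{t+1})`. Averaging over the graph gives the theorem.
-/

open Finset

section BernoulliWeight

variable {ι : Type*} [Fintype ι] [DecidableEq ι] {p : ℝ≥0∞}

noncomputable def bernoulliWeight (p : ℝ≥0∞) (c : ι → Bool) : ℝ≥0∞ :=
  ∏ i, cond (c i) p (1 - p)

theorem sum_cond_eq_one (hp : p ≤ 1) : ∑ b : Bool, cond b p (1 - p) = 1 := by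
  simp [hp]

theorem sum_bernoulliWeight (hp : p ≤ 1) : ∑ c : ι → Bool, bernoulliWeight p c = 1 := by
  simp only [bernoulliWeight]
  rw [← Fintype.prod_sum (fun _ b => cond b p (1 - p))]
  simp only [sum_cond_eq_one hp, prod_const_one]

theorem sum_bernoulliWeight_mul_eq_sum_update (hp : p ≤ 1) (a : ι)
    (F : (ι → Bool) → ℝ≥0∞) :
    ∑ c, bernoulliWeight p c * F c =
      ∑ b : Bool, cond b p (1 - p) * ∑ c, bernoulliWeight p c * F (Function.update c a b) := by
  set e := Equiv.funSplitAt a Bool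
  have weight_split : ∀ v d, bernoulliWeight p (e.symm (v, d)) =
      cond v p (1 - p) * ∏ j : {j // j ≠ a}, cond (d j) p (1 - p) := by
    intro v d
    rw [bernoulliWeight, Fintype.prod_eq_mul_prod_subtype_ne _ a]
    congr 1
    · simp [e]
    · exact prod_congr rfl fun j _ => by simp [e, j.2]
  have update_split : ∀ v d b, Function.update (e.symm (v, d)) a b = e.symm (b, d) := by
    intro v d b
    ext j
    by_cases hj : j = a <;> simp [e, hj]
  simp only [← e.symm.sum_comp, Fintype.sum_prod_type, weight_split, update_split, mul_assoc,
    ← mul_sum, ← sum_mul, sum_cond_eq_one hp, one_mul]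

end BernoulliWeight

namespace PMF

variable {α β : Type*}

theorem tsum_pure_mul (a : α) (g : α → ℝ≥0∞) : ∑' b, pure a b * g b = g a := by
  rw [tsum_eq_single a fun b hb => by simp [pure_apply_of_ne _ _ hb]]
  simp

theorem tsum_map_mul (μ : PMF α) (f : α → β) (g : β → ℝ≥0∞) :
    ∑' b, μ.map f b * g b = ∑' a, μ a * g (f a) := by
  simp only [map_apply, ← ENNReal.tsum_mul_right]
  rw [ENNReal.tsum_comm]
  refine tsum_congr fun a => ?_
  rw [tsum_eq_single (f a) fun b hb => by simp [hb]]
  simp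

theorem tsum_bind_mul (μ : PMF α) (f : α → PMF β) (g : β → ℝ≥0∞) :
    ∑' b, μ.bind f b * g b = ∑' a, μ a * ∑' b, f a b * g b := by
  simp only [bind_apply, ← ENNReal.tsum_mul_right, ← ENNReal.tsum_mul_left, mul_assoc]
  exact ENNReal.tsum_comm

end PMF

section BernoulliSumLaw

variable {p : ℝ≥0∞} (hp : p ≤ 1)

theorem tsum_bernoulliSumLaw_zero_mul (g : ℕ → ℝ≥0∞) :
    ∑' s, bernoulliSumLaw p hp 0 s * g s = g 0 :=
  PMF.tsum_pure_mul 0 g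

theorem tsum_bernoulliSumLaw_succ_mul (m : ℕ) (g : ℕ → ℝ≥0∞) :
    ∑' s, bernoulliSumLaw p hp (m + 1) s * g s =
      ∑ b : Bool, cond b p (1 - p) *
        ∑' s, bernoulliSumLaw p hp m s * g (s + if b then 1 else 0) := by
  rw [bernoulliSumLaw, PMF.tsum_bind_mul, tsum_fintype]
  simp only [PMF.ofFintype_apply, PMF.tsum_map_mul]

theorem sum_bernoulliWeight_mul_card_filter {ι : Type*} [Fintype ι] [DecidableEq ι]
    (A : Finset ι) (g : ℕ → ℝ≥0∞) :
    ∑ c : ι → Bool, bernoulliWeight p c * g #{i ∈ A | c i} =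
      ∑' s, bernoulliSumLaw p hp #A s * g s := by
  induction A using Finset.induction_on generalizing g with
  | empty => simp [← sum_mul, sum_bernoulliWeight hp, tsum_bernoulliSumLaw_zero_mul]
  | insert a A ha ih =>
    have card_filter_update : ∀ (c : ι → Bool) (b : Bool),
        #{i ∈ insert a A | Function.update c a b i} = #{i ∈ A | c i} + if b then 1 else 0 := by
      intro c b
      have hA : {i ∈ A | Function.update c a b i} = {i ∈ A | c i} :=
        filter_congr fun i hi => by rw [Function.update_of_ne (ne_of_mem_of_not_mem hi ha)]
      cases b <;> simp [filter_insert, hA, ha]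
    rw [sum_bernoulliWeight_mul_eq_sum_update hp a, card_insert_of_notMem ha,
      tsum_bernoulliSumLaw_succ_mul]
    simp only [card_filter_update]
    exact sum_congr rfl fun b _ => by rw [ih fun s => g (s + if b then 1 else 0)]

theorem monotone_tsum_bernoulliSumLaw_mul {g : ℕ → ℝ≥0∞} (hg : Monotone g) :
    Monotone fun m => ∑' s, bernoulliSumLaw p hp m s * g s := by
  refine monotone_nat_of_le_succ fun m => ?_
  calc ∑' s, bernoulliSumLaw p hp m s * g s
      = ∑ b : Bool, cond b p (1 - p) * ∑' s, bernoulliSumLaw p hp m s * g s := by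
        rw [← sum_mul, sum_cond_eq_one hp, one_mul]
    _ ≤ _ := by
        rw [tsum_bernoulliSumLaw_succ_mul]
        gcongr with b _ s
        exact hg (Nat.le_add_right _ _)

end BernoulliSumLaw

section DualProcess

variable {n r : ℕ} (y : Fin n → Fin r → Fin n) (ξ0 : Fin n → Bool)

theorem xihat_eq_of_forall_lt {B B' : Fin n → ℕ → Bool} {t : ℕ}
    (h : ∀ z, ∀ s < t, B z s = B' z s) : xihat y B ξ0 t = xihat y B' ξ0 t := by
  induction t with
  | zero => rfl
  | succ t ih =>
    funext x
    simp only [xihat, ih fun z s hs => h z s (Nat.lt_succ_of_lt hs), h _ t (Nat.lt_succ_self t)]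

theorem numOnes_xihat_succ_le (B : Fin n → ℕ → Bool) (t : ℕ) :
    numOnes (xihat y B ξ0 (t + 1)) ≤ r * #{z | xihat y B ξ0 t z ∧ B z t} := by
  have support_subset : ({x | xihat y B ξ0 (t + 1) x} : Finset (Fin n)) ⊆
      ({z | xihat y B ξ0 t z ∧ B z t} : Finset (Fin n)).biUnion fun z => univ.image (y z) := by
    intro x hx
    simp only [xihat, mem_filter, mem_univ, true_and, decide_eq_true_eq] at hx
    obtain ⟨z, i, rfl, hz, hB⟩ := hx
    simpa using ⟨z, ⟨hz, hB⟩, i, rfl⟩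
  rw [mul_comm]
  refine (card_le_card support_subset).trans (card_biUnion_le_card_mul _ _ _ fun z _ => ?_)
  exact card_image_le.trans (by simp)

end DualProcess

section Blocks

variable {n : ℕ}

/-- A block `b : Fin t → Fin n → Bool` stores the driving variable `B z s` (`s < t`) as `b s z`;
`extendBlock` sets all later variables to `false`. -/
def extendBlock {t : ℕ} (b : Fin t → Fin n → Bool) : Fin n → ℕ → Bool :=
  fun z s => if h : s < t then b ⟨s, h⟩ z else false

def restrictBlock (t : ℕ) (B : Fin n → ℕ → Bool) : Fin t → Fin n → Bool :=
  fun s z => B z s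

noncomputable def blockWeight (p : ℝ≥0∞) {t : ℕ} (b : Fin t → Fin n → Bool) : ℝ≥0∞ :=
  ∏ s, bernoulliWeight p (b s)

theorem blockWeight_snoc (p : ℝ≥0∞) {t : ℕ} (b : Fin t → Fin n → Bool) (c : Fin n → Bool) :
    blockWeight p (Fin.snoc b c) =
      blockWeight p b * bernoulliWeight p c := by
  simp [blockWeight, Fin.prod_univ_castSucc]

theorem extendBlock_snoc_of_lt {t : ℕ} (b : Fin t → Fin n → Bool) (c : Fin n → Bool) (z : Fin n)
    {s : ℕ} (hs : s < t) :
    extendBlock (Fin.snoc b c) z s = extendBlock b z s := by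
  simp [extendBlock, hs, Nat.lt_succ_of_lt hs, Fin.snoc]

theorem extendBlock_snoc_self {t : ℕ} (b : Fin t → Fin n → Bool) (c : Fin n → Bool) (z : Fin n) :
    extendBlock (Fin.snoc b c) z t = c z := by
  simp [extendBlock, Fin.snoc]

theorem extendBlock_restrictBlock_of_lt (t : ℕ) (B : Fin n → ℕ → Bool) (z : Fin n) {s : ℕ}
    (hs : s < t) :
    extendBlock (restrictBlock t B) z s = B z s := by
  simp [extendBlock, restrictBlock, hs]

theorem sum_blocks_succ {t : ℕ} (f : (Fin (t + 1) → Fin n → Bool) → ℝ≥0∞) :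
    ∑ b, f b = ∑ b : Fin t → Fin n → Bool, ∑ c, f (Fin.snoc b c) := by
  rw [← (Fin.snocEquiv fun _ => Fin n → Bool).sum_comp, Fintype.sum_prod_type, sum_comm]
  rfl

end Blocks

section Domination

variable {n r : ℕ} (y : Fin n → Fin r → Fin n) (ξ0 : Fin n → Bool) {p : ℝ≥0∞} (hp : p ≤ 1)

theorem tsum_gwLaw_succ_mul (t : ℕ) (g : ℕ → ℝ≥0∞) :
    ∑' m, gwLaw p hp r (t + 1) m * g m =
      ∑' m, gwLaw p hp r t m * ∑' s, bernoulliSumLaw p hp m s * g (r * s) := by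
  simp only [gwLaw, PMF.tsum_bind_mul, PMF.tsum_map_mul]

theorem sum_bernoulliWeight_mul_numOnes_xihat_succ_le {t : ℕ} (b : Fin t → Fin n → Bool)
    {g : ℕ → ℝ≥0∞} (hg : Monotone g) :
    ∑ c, bernoulliWeight p c * g (numOnes (xihat y (extendBlock (Fin.snoc b c)) ξ0 (t + 1))) ≤
      ∑' s, bernoulliSumLaw p hp (numOnes (xihat y (extendBlock b) ξ0 t)) s * g (r * s) := by
  rw [numOnes, ← sum_bernoulliWeight_mul_card_filter hp]
  gcongr with c
  refine hg ((numOnes_xihat_succ_le y ξ0 _ t).trans_eq ?_)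
  rw [xihat_eq_of_forall_lt y ξ0 fun z s hs => extendBlock_snoc_of_lt b c z hs, filter_filter]
  simp only [extendBlock_snoc_self]

theorem sum_blockWeight_mul_le_tsum_gwLaw_mul (hξ0 : numOnes ξ0 ≤ 1) (t : ℕ) {g : ℕ → ℝ≥0∞}
    (hg : Monotone g) :
    ∑ b : Fin t → Fin n → Bool, blockWeight p b * g (numOnes (xihat y (extendBlock b) ξ0 t)) ≤
      ∑' m, gwLaw p hp r t m * g m := by
  induction t generalizing g with
  | zero => simpa [blockWeight, xihat, gwLaw, PMF.tsum_pure_mul] using hg hξ0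
  | succ t ih =>
    calc _ = ∑ b, blockWeight p b * ∑ c, bernoulliWeight p c *
            g (numOnes (xihat y (extendBlock (Fin.snoc b c)) ξ0 (t + 1))) := by
          simp only [sum_blocks_succ, blockWeight_snoc, mul_assoc, ← mul_sum]
          rfl
      _ ≤ ∑ b, blockWeight p b *
            ∑' s, bernoulliSumLaw p hp (numOnes (xihat y (extendBlock b) ξ0 t)) s * g (r * s) := by
          gcongr with b
          exact sum_bernoulliWeight_mul_numOnes_xihat_succ_le y ξ0 hp b hg
      _ ≤ ∑' m, gwLaw p hp r t m * ∑' s, bernoulliSumLaw p hp m s * g (r * s) :=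
          ih (monotone_tsum_bernoulliSumLaw_mul hp fun _ _ h => hg (Nat.mul_le_mul_left r h))
      _ = _ := (tsum_gwLaw_succ_mul hp t g).symm

end Domination

section Measure

variable {n : ℕ} {q : ℝ} {μB : Measure (Fin n → ℕ → Bool)}

theorem measurable_restrictBlock (t : ℕ) : Measurable (restrictBlock (n := n) t) := by
  unfold restrictBlock
  fun_prop

theorem setOf_xihat_eq_preimage_restrictBlock {r : ℕ} (y : Fin n → Fin r → Fin n)
    (ξ0 : Fin n → Bool) (t : ℕ) (P : (Fin n → Bool) → Prop) :
    {B | P (xihat y B ξ0 t)} = restrictBlock t ⁻¹' {b | P (xihat y (extendBlock b) ξ0 t)} := by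
  ext B
  simp only [Set.mem_ofPred_eq, Set.mem_preimage,
    xihat_eq_of_forall_lt y ξ0 fun z s hs => (extendBlock_restrictBlock_of_lt t B z hs).symm]

theorem IsBernoulliProduct.measure_restrictBlock_preimage_singleton (hμB : IsBernoulliProduct q μB)
    (hq0 : 0 ≤ q) {t : ℕ} (b : Fin t → Fin n → Bool) :
    μB (restrictBlock t ⁻¹' {b}) = blockWeight (ENNReal.ofReal q) b := by
  have cylinder : restrictBlock t ⁻¹' {b} =
      {B | ∀ x ∈ univ ×ˢ range t, B x.1 x.2 = extendBlock b x.1 x.2} := by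
    ext B
    simp only [restrictBlock, extendBlock, Set.mem_preimage, Set.mem_singleton_iff, funext_iff,
      Set.mem_ofPred_eq, mem_product, mem_univ, mem_range, true_and, Prod.forall]
    constructor
    · intro h z s hs
      rw [dif_pos hs]
      exact h ⟨s, hs⟩ z
    · intro h s z
      rw [h z s s.2, dif_pos s.2]
  rw [cylinder, hμB, prod_product, blockWeight, prod_comm' fun _ _ => Iff.rfl]
  simp only [← Fin.prod_univ_eq_prod_range, bernoulliWeight]
  have one_sub : ENNReal.ofReal (1 - q) = 1 - ENNReal.ofReal q := by
    rw [ENNReal.ofReal_sub 1 hq0, ENNReal.ofReal_one]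
  refine prod_congr rfl fun s _ => prod_congr rfl fun z _ => ?_
  simp only [extendBlock, dif_pos s.2, Fin.eta]
  cases b s z <;> simp [one_sub]

theorem IsBernoulliProduct.measure_restrictBlock_preimage (hμB : IsBernoulliProduct q μB)
    (hq0 : 0 ≤ q) {t : ℕ} (S : Finset (Fin t → Fin n → Bool)) :
    μB (restrictBlock t ⁻¹' S) = ∑ b ∈ S, blockWeight (ENNReal.ofReal q) b := by
  rw [← sum_measure_preimage_singleton S fun b _ =>
    measurable_restrictBlock t (measurableSet_singleton b)]
  exact sum_congr rfl fun b _ => hμB.measure_restrictBlock_preimage_singleton hq0 b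

theorem IsBernoulliProduct.measure_le_numOnes_xihat_le (hμB : IsBernoulliProduct q μB)
    (hq0 : 0 ≤ q) (hq1 : q ≤ 1) {r : ℕ} (y : Fin n → Fin r → Fin n) (ξ0 : Fin n → Bool)
    (hξ0 : numOnes ξ0 ≤ 1) (t k : ℕ) :
    μB {B | k ≤ numOnes (xihat y B ξ0 t)} ≤
      (gwLaw (ENNReal.ofReal q) (ENNReal.ofReal_le_one.mpr hq1) r t).toMeasure {z | k ≤ z} := by
  have tail_monotone : Monotone fun m : ℕ => if k ≤ m then (1 : ℝ≥0∞) else 0 :=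
    fun a b hab => by dsimp only; split_ifs <;> simp_all; omega
  rw [setOf_xihat_eq_preimage_restrictBlock y ξ0 t fun ξ => k ≤ numOnes ξ, ← coe_filter_univ,
    hμB.measure_restrictBlock_preimage hq0, PMF.toMeasure_apply _ (.of_discrete), sum_filter]
  convert sum_blockWeight_mul_le_tsum_gwLaw_mul y ξ0 (ENNReal.ofReal_le_one.mpr hq1) hξ0 t
    tail_monotone using 1
  · simp only [mul_ite, mul_one, mul_zero]
  · simp only [Set.indicator_apply, Set.mem_ofPred_eq, mul_ite, mul_one, mul_zero]

end Measure

theorem graphMeasure_univ_le_one (n r : ℕ) : graphMeasure n r Set.univ ≤ 1 := by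
  simp [graphMeasure, Measure.count_univ, ENat.card_eq_coe_natCard]

theorem dual_dominated_by_branching_general
    (r : ℕ) (q : ℝ) (hq0 : 0 ≤ q) (hq1 : q ≤ 1)
    (n : ℕ)
    (μB : Measure (Fin n → ℕ → Bool)) (hμB : IsBernoulliProduct q μB)
    (x : Fin n) (t k : ℕ) :
    Pn n r μB {ω | k ≤ numOnes (xihat ω.1.1 ω.2 (fun v => decide (v = x)) t)} ≤
      (gwLaw (ENNReal.ofReal q) (ENNReal.ofReal_le_one.mpr hq1) r t).toMeasure
        {z : ℕ | k ≤ z} := by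
  set ξ0 : Fin n → Bool := fun v => decide (v = x)
  set V := (gwLaw (ENNReal.ofReal q) (ENNReal.ofReal_le_one.mpr hq1) r t).toMeasure {z | k ≤ z}
  set E := {ω : {y // IsGraph y} × (Fin n → ℕ → Bool) | k ≤ numOnes (xihat ω.1.1 ω.2 ξ0 t)}
  have hξ0 : numOnes ξ0 ≤ 1 := by simp [ξ0, numOnes, filter_eq']
  have section_le (Y : {y : Fin n → Fin r → Fin n // IsGraph y}) : μB (Prod.mk Y ⁻¹' E) ≤ V :=
    hμB.measure_le_numOnes_xihat_le hq0 hq1 Y.1 ξ0 hξ0 t k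
  have measurable_E : MeasurableSet E := by
    refine measurableSet_setOfPred.mpr (measurable_from_prod_countable_right fun Y => ?_)
    rw [← measurableSet_setOfPred,
      setOf_xihat_eq_preimage_restrictBlock Y.1 ξ0 t fun ξ => k ≤ numOnes ξ]
    exact measurable_restrictBlock t (.of_discrete)
  calc Pn n r μB E ≤ ∫⁻ Y, μB (Prod.mk Y ⁻¹' E) ∂graphMeasure n r :=
        Measure.prod_apply_le measurable_E
    _ ≤ ∫⁻ _, V ∂graphMeasure n r := lintegral_mono section_le
    _ = V * graphMeasure n r Set.univ := lintegral_const V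
    _ ≤ V := mul_le_of_le_one_right' (graphMeasure_univ_le_one n r)

/-- **Stochastic domination by the branching process.** For every `x`, `t` and `k`,
`P_n(|ξ̂^x_t| ≥ k) ≤ P(Z_t ≥ k)`. -/
theorem dual_dominated_by_branching
    (r : ℕ) (hr : 1 ≤ r) (q : ℝ) (hq0 : 0 ≤ q) (hq1 : q ≤ 1)
    (n : ℕ) (hn : r < n)
    (μB : Measure (Fin n → ℕ → Bool)) (hμB : IsBernoulliProduct q μB)
    (x : Fin n) (t k : ℕ) :
    Pn n r μB {ω | k ≤ numOnes (xihat ω.1.1 ω.2 (fun v => decide (v = x)) t)} ≤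
      (gwLaw (ENNReal.ofReal q) (ENNReal.ofReal_le_one.mpr hq1) r t).toMeasure
        {z : ℕ | k ≤ z} :=
  dual_dominated_by_branching_general r q hq0 hq1 n μB hμB x t k
end
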